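/- Let E : ℕ → ℝ be a sequence of real numbers and for t ∈ ℝ let U_t denote the time-evolution map on ℓ²(ℕ, ℂ) given by (U_t c)ₙ = exp(-i·Eₙ·t)·cₙ. Let X ⊆ ℓ²(ℕ, ℂ) be a compact set. Then for every t > 0 and every ε > 0 there exists a single s ≥ 0 such that ‖U_{-t} c - U_s c‖ < ε for all c ∈ X simultaneously. -/

import Mathlib

/-!
Since `U` is a group of unitaries, `‖U_{-t} c - U_s c‖ = ‖U_{s+t} c - c‖`, so it suffices to find
arbitrarily large return times `r` at which `U_r` is uniformly close to the identity on `X`.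
For finitely many frequencies `E₀, …, E_{N-1}` such times exist by Bolzano–Weierstrass: among the
phase vectors `(e^{-i Eₙ k τ})_{n < N}`, `k ∈ ℕ`, two with `k < l` are close, and `r = (l - k) τ`.
Choosing `N` so that the tails beyond `N` of finitely many states are small handles a finite set of
states, and an `η / 3`-net of `X` extends this to the compact set `X`, since every `U_r` is an
isometry.
-/

open scoped ENNReal

/-- The time-evolution map `U_t` on `ℓ²(ℕ, ℂ)`: `(U_t c)ₙ = exp(-i·Eₙ·t)·cₙ`. -/
noncomputable def timeEvol (E : ℕ → ℝ) (t : ℝ) (c : lp (fun _ : ℕ => ℂ) 2) :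
    lp (fun _ : ℕ => ℂ) 2 :=
  ⟨fun n => Complex.exp ((-(E n * t) : ℝ) * Complex.I) * (c : ∀ _ : ℕ, ℂ) n, by
    apply memℓp_gen
    have hs : Summable fun n : ℕ => ‖(c : ∀ _ : ℕ, ℂ) n‖ ^ (2 : ℝ≥0∞).toReal :=
      (lp.memℓp c).summable (by norm_num)
    refine hs.congr fun n => ?_
    simp [norm_mul, Complex.norm_exp]⟩

open Filter Topology Finset Metric
open scoped lp

theorem lp.hasSum_norm_sq {α : Type*} {E : α → Type*} [∀ i, NormedAddCommGroup (E i)]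
    (f : lp E 2) : HasSum (fun i => ‖f i‖ ^ 2) (‖f‖ ^ 2) := by
  simpa using lp.hasSum_norm (p := 2) (by norm_num) f

theorem Bornology.IsBounded.exists_lt_dist_lt {X : Type*} [PseudoMetricSpace X] [ProperSpace X]
    {s : Set X} (hs : IsBounded s) {u : ℕ → X} (hu : ∀ n, u n ∈ s) {δ : ℝ} (hδ : 0 < δ) :
    ∃ k l, k < l ∧ dist (u l) (u k) < δ := by
  obtain ⟨_, -, φ, hφ, hlim⟩ := tendsto_subseq_of_bounded hs hu
  obtain ⟨K, hK⟩ := Metric.cauchySeq_iff.1 hlim.cauchySeq δ hδ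
  exact ⟨φ K, φ (K + 1), hφ K.lt_succ_self, hK _ K.le_succ _ le_rfl⟩

section

variable (E : ℕ → ℝ)

noncomputable def phase (r : ℝ) (n : ℕ) : ℂ := Complex.exp ((-(E n * r) : ℝ) * Complex.I)

@[simp] theorem norm_phase (r : ℝ) (n : ℕ) : ‖phase E r n‖ = 1 := by
  simp [phase, Complex.norm_exp]

theorem phase_add (r s : ℝ) (n : ℕ) : phase E (r + s) n = phase E r n * phase E s n := by
  rw [phase, phase, phase, ← Complex.exp_add]
  push_cast
  ring_nf

theorem timeEvol_apply (t : ℝ) (c : ℓ²(ℕ, ℂ)) (n : ℕ) :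
    timeEvol E t c n = phase E t n * c n :=
  rfl

theorem timeEvol_sub (t : ℝ) (c d : ℓ²(ℕ, ℂ)) :
    timeEvol E t (c - d) = timeEvol E t c - timeEvol E t d := by
  ext n
  simp [timeEvol_apply, mul_sub]

theorem timeEvol_timeEvol (s t : ℝ) (c : ℓ²(ℕ, ℂ)) :
    timeEvol E s (timeEvol E t c) = timeEvol E (s + t) c := by
  ext n
  simp [timeEvol_apply, phase_add, mul_assoc]

@[simp] theorem norm_timeEvol (t : ℝ) (c : ℓ²(ℕ, ℂ)) : ‖timeEvol E t c‖ = ‖c‖ := by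
  simp [lp.norm_eq_tsum_rpow, timeEvol_apply]

theorem norm_timeEvol_sub_timeEvol (a b : ℝ) (c : ℓ²(ℕ, ℂ)) :
    ‖timeEvol E a c - timeEvol E b c‖ = ‖timeEvol E (b - a) c - c‖ := by
  have hb : timeEvol E b c = timeEvol E a (timeEvol E (b - a) c) := by
    rw [timeEvol_timeEvol, add_sub_cancel]
  rw [hb, ← timeEvol_sub, norm_timeEvol, norm_sub_rev]

theorem norm_timeEvol_sub_self_sq_le (c : ℓ²(ℕ, ℂ)) {r δ : ℝ} {N : ℕ}
    (h : ∀ n < N, ‖phase E r n - 1‖ ≤ δ) :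
    ‖timeEvol E r c - c‖ ^ 2 ≤ δ ^ 2 * ‖c‖ ^ 2 + 4 * (‖c‖ ^ 2 - ∑ n ∈ range N, ‖c n‖ ^ 2) := by
  set a := fun n => ‖phase E r n - 1‖ ^ 2 * ‖c n‖ ^ 2
  have ha : HasSum a (‖timeEvol E r c - c‖ ^ 2) := by
    convert lp.hasSum_norm_sq (timeEvol E r c - c) using 2 with n
    simp only [a, lp.coeFn_sub, Pi.sub_apply, timeEvol_apply, ← sub_one_mul, norm_mul, mul_pow]
  have hc := lp.hasSum_norm_sq c
  have head : ∑ n ∈ range N, a n ≤ δ ^ 2 * ‖c‖ ^ 2 := calc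
    ∑ n ∈ range N, a n ≤ ∑ n ∈ range N, δ ^ 2 * ‖c n‖ ^ 2 := by
      refine sum_le_sum fun n hn => ?_
      dsimp only [a]
      gcongr
      exact h n (mem_range.1 hn)
    _ ≤ δ ^ 2 * ‖c‖ ^ 2 := by
      rw [← mul_sum]
      gcongr
      exact sum_le_hasSum _ (fun n _ => by positivity) hc
  have tail : ‖timeEvol E r c - c‖ ^ 2 - ∑ n ∈ range N, a n
      ≤ 4 * (‖c‖ ^ 2 - ∑ n ∈ range N, ‖c n‖ ^ 2) := by
    refine hasSum_le (fun k => ?_) ((hasSum_nat_add_iff' N).2 ha)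
      (((hasSum_nat_add_iff' N).2 hc).mul_left 4)
    have h2 : ‖phase E r (k + N) - 1‖ ^ 2 ≤ 2 ^ 2 := by
      gcongr
      exact (norm_sub_le _ _).trans (by norm_num)
    dsimp only [a]
    gcongr
    exact h2.trans_eq (by norm_num)
  linarith

theorem frequently_forall_norm_phase_sub_one_lt (N : ℕ) {δ : ℝ} (hδ : 0 < δ) :
    ∃ᶠ r in atTop, ∀ n < N, ‖phase E r n - 1‖ < δ := by
  refine frequently_atTop.2 fun T => ?_
  set τ := max T 1
  have hτ : 0 < τ := lt_max_of_lt_right one_pos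
  let orbit : ℕ → Fin N → ℂ := fun k n => phase E (k * τ) n
  have horbit k : orbit k ∈ closedBall 0 1 :=
    mem_closedBall_zero_iff.2 <| pi_norm_le_iff_of_nonneg zero_le_one |>.2 fun n => by simp [orbit]
  obtain ⟨k, l, hkl, hdist⟩ := isBounded_closedBall.exists_lt_dist_lt horbit hδ
  have hstep : (1 : ℝ) ≤ (l : ℝ) - k := by
    rw [le_sub_iff_add_le']
    exact_mod_cast hkl
  refine ⟨(l - k) * τ, (le_max_left T 1).trans (le_mul_of_one_le_left hτ.le hstep),
    fun n hn => ?_⟩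
  have hphase : phase E (l * τ) n = phase E (k * τ) n * phase E ((l - k) * τ) n := by
    rw [← phase_add]
    ring_nf
  calc ‖phase E ((l - k) * τ) n - 1‖
      = ‖phase E (l * τ) n - phase E (k * τ) n‖ := by
        rw [hphase, ← mul_sub_one, norm_mul, norm_phase, one_mul]
    _ ≤ dist (orbit l) (orbit k) := by
        rw [← dist_eq_norm]
        exact dist_le_pi_dist (orbit l) (orbit k) ⟨n, hn⟩
    _ < δ := hdist

theorem Set.Finite.frequently_forall_norm_timeEvol_sub_self_lt {F : Set ℓ²(ℕ, ℂ)}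
    (hF : F.Finite) {η : ℝ} (hη : 0 < η) :
    ∃ᶠ r in atTop, ∀ f ∈ F, ‖timeEvol E r f - f‖ < η := by
  have hbound (f : ℓ²(ℕ, ℂ)) : Tendsto (fun p : ℕ × ℝ => p.2 ^ 2 * ‖f‖ ^ 2 +
      4 * (‖f‖ ^ 2 - ∑ n ∈ Finset.range p.1, ‖f n‖ ^ 2)) (atTop ×ˢ 𝓝[>] 0) (𝓝 0) := by
    have hsum : Tendsto (fun p : ℕ × ℝ => ∑ n ∈ Finset.range p.1, ‖f n‖ ^ 2)
        (atTop ×ˢ 𝓝[>] 0) (𝓝 (‖f‖ ^ 2)) :=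
      (lp.hasSum_norm_sq f).tendsto_sum_nat.comp tendsto_fst
    have hδ : Tendsto (fun p : ℕ × ℝ => p.2) (atTop ×ˢ 𝓝[>] 0) (𝓝 0) :=
      tendsto_nhdsWithin_of_tendsto_nhds tendsto_id |>.comp tendsto_snd
    convert (hδ.pow 2).mul_const (‖f‖ ^ 2) |>.add ((tendsto_const_nhds.sub hsum).const_mul 4)
    simp
  have hev : ∀ᶠ p : ℕ × ℝ in atTop ×ˢ 𝓝[>] 0, 0 < p.2 ∧ ∀ f ∈ F,
      p.2 ^ 2 * ‖f‖ ^ 2 + 4 * (‖f‖ ^ 2 - ∑ n ∈ Finset.range p.1, ‖f n‖ ^ 2) < η ^ 2 :=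
    (eventually_mem_nhdsWithin.prod_inr atTop).and <|
      hF.eventually_all.2 fun f _ => hbound f |>.eventually (gt_mem_nhds (by positivity))
  obtain ⟨⟨N, δ⟩, hδ, hN⟩ := hev.exists
  refine (frequently_forall_norm_phase_sub_one_lt E N hδ).mono fun r hr f hf => ?_
  refine pow_lt_pow_iff_left₀ (norm_nonneg _) hη.le two_ne_zero |>.1 ?_
  exact (norm_timeEvol_sub_self_sq_le E f fun n hn => (hr n hn).le).trans_lt (hN f hf)

theorem IsCompact.frequently_forall_norm_timeEvol_sub_self_lt {X : Set ℓ²(ℕ, ℂ)}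
    (hX : IsCompact X) {η : ℝ} (hη : 0 < η) :
    ∃ᶠ r in atTop, ∀ c ∈ X, ‖timeEvol E r c - c‖ < η := by
  obtain ⟨F, -, hF, hXF⟩ := hX.finite_cover_balls (e := η / 3) (by positivity)
  refine (hF.frequently_forall_norm_timeEvol_sub_self_lt E (η := η / 3) (by positivity)).mono
    fun r hr c hc => ?_
  obtain ⟨f, hf, hcf⟩ := Set.mem_iUnion₂.1 (hXF hc)
  rw [mem_ball, dist_eq_norm] at hcf
  have hsplit :
      timeEvol E r c - c = (timeEvol E r f - f) + (timeEvol E r (c - f) - (c - f)) := by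
    rw [timeEvol_sub]
    abel
  calc ‖timeEvol E r c - c‖
      ≤ ‖timeEvol E r f - f‖ + (‖timeEvol E r (c - f)‖ + ‖c - f‖) := by
        rw [hsplit]
        exact (norm_add_le _ _).trans (by gcongr; exact norm_sub_le _ _)
    _ < η / 3 + (η / 3 + η / 3) := by
        rw [norm_timeEvol]
        gcongr
        exact hr f hf
    _ = η := by ring

end

theorem backward_approx_forward_compact_general (E : ℕ → ℝ)
    (X : Set (lp (fun _ : ℕ => ℂ) 2)) (hX : IsCompact X) (t ε : ℝ)
    (hε : 0 < ε) :
    ∃ s : ℝ, 0 ≤ s ∧ ∀ c ∈ X, ‖timeEvol E (-t) c - timeEvol E s c‖ < ε := by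
  obtain ⟨r, hr, hrecur⟩ :=
    frequently_atTop.1 (hX.frequently_forall_norm_timeEvol_sub_self_lt E hε) t
  refine ⟨r - t, sub_nonneg.2 hr, fun c hc => ?_⟩
  rw [norm_timeEvol_sub_timeEvol, sub_neg_eq_add, sub_add_cancel]
  exact hrecur c hc

/-- backward evolution approximated by forward evolution, uniformly
over a compact set of states. -/
theorem backward_approx_forward_compact (E : ℕ → ℝ)
    (X : Set (lp (fun _ : ℕ => ℂ) 2)) (hX : IsCompact X) (t ε : ℝ)
    (ht : 0 < t) (hε : 0 < ε) :
    ∃ s : ℝ, 0 ≤ s ∧ ∀ c ∈ X, ‖timeEvol E (-t) c - timeEvol E s c‖ < ε :=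
  backward_approx_forward_compact_general E X hX t ε hε
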